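/- arXiv:2508.19158 — 6 statements merged into one kernel-verified Lean document; each statement's English description precedes it below -/
import Mathlib

section
/- In the OR-Index pointer-chasing construction, let 0 ≤ ℓ ≤ m be such that (y_i)_{x_i} = 0 for all 1 ≤ i ≤ ℓ. Then Walk_A^{2ℓ}(1) = rℓ+1. -/
/-- The walk function: `walk FA FB r i` applies `FA`, then `FB`, alternately, `r` times,
starting from `i`. Then `Walk_A^r = walk FA FB r` and `Walk_B^r = walk FB FA r`. -/
def walk {α : Type*} (FA FB : α → α) : ℕ → α → α
  | 0, i => i
  | r + 1, i => walk FB FA r (FA i)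

/-- If 0 ≤ ℓ ≤ m and (y_i)_{x_i} = 0 for all 1 ≤ i ≤ ℓ, then Walk_A^{2ℓ}(1) = rℓ+1. -/
theorem stmt5
    (r m n : ℕ) (hr : 2 ≤ r) (hm : 1 ≤ m) (hn : r * m + 2 ≤ n)
    (x : ℕ → ℕ) (hx : ∀ i ∈ Finset.Icc 1 m, x i ∈ Finset.Icc 1 r)
    (y : ℕ → ℕ → Bool)
    (NA NB : ℕ → ℕ)
    (hNA1 : ∀ i ∈ Finset.Icc 1 m, NA (r * (i - 1) + 1) = r * (i - 1) + x i)
    (hNA2 : NA (r * m + 1) = r * m + 1)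
    (hNA3 : NA (r * m + 2) = r * m + 2)
    (hNA4 : ∀ s ∈ Finset.Icc 1 n, (∀ i ∈ Finset.Icc 1 m, s ≠ r * (i - 1) + 1) →
      s ≠ r * m + 1 → s ≠ r * m + 2 → NA s = 1)
    (hNB1 : ∀ i ∈ Finset.Icc 1 m, ∀ j ∈ Finset.Icc 1 r,
      NB (r * (i - 1) + j) = if y i j then r * m + 2 else r * i + 1)
    (hNB2 : NB (r * m + 1) = r * m + 1)
    (hNB3 : NB (r * m + 2) = r * m + 2)
    (hNB4 : ∀ s ∈ Finset.Icc 1 n,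
      (∀ i ∈ Finset.Icc 1 m, ∀ j ∈ Finset.Icc 1 r, s ≠ r * (i - 1) + j) →
      s ≠ r * m + 1 → s ≠ r * m + 2 → NB s = 1)
    (l : ℕ) (hl : l ≤ m) (hy : ∀ i ∈ Finset.Icc 1 l, y i (x i) = false) :
    walk NA NB (2 * l) 1 = r * l + 1 := by
  have key : ∀ k a, a + k ≤ m →
      (∀ i ∈ Finset.Icc (a + 1) (a + k), y i (x i) = false) →
      walk NA NB (2 * k) (r * a + 1) = r * (a + k) + 1 := by
    intro k
    induction k with
    | zero => intro a _ _; simp [walk]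
    | succ k ih =>
      intro a ham hy'
      have hi : a + 1 ∈ Finset.Icc 1 m := by
        simp [Finset.mem_Icc]; omega
      have hA : NA (r * a + 1) = r * a + x (a + 1) := by
        have := hNA1 (a + 1) hi
        simpa using this
      have hxj := hx (a + 1) hi
      rw [Finset.mem_Icc] at hxj
      have hB : NB (r * a + x (a + 1)) = r * (a + 1) + 1 := by
        have := hNB1 (a + 1) hi (x (a + 1)) (Finset.mem_Icc.mpr hxj)
        simp only [Nat.add_sub_cancel] at this
        rw [this, hy' (a + 1) (by rw [Finset.mem_Icc]; omega)]
        simp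
      have hstep : 2 * (k + 1) = (2 * k) + 1 + 1 := by ring
      rw [hstep]
      show walk NB NA (2 * k + 1) (NA (r * a + 1)) = _
      rw [hA]
      show walk NA NB (2 * k) (NB (r * a + x (a + 1))) = _
      rw [hB]
      have := ih (a + 1) (by omega)
        (fun i hi' => hy' i (by rw [Finset.mem_Icc] at hi' ⊢; omega))
      rw [this]
      ring_nf
  have := key l 0 (by omega) (by simpa using hy)
  simpa using this
end

section
/- In the OR-Index pointer-chasing construction, suppose i ∈ [m] is the smallest index such that (y_i)_{x_i} = 1 (so (y_j)_{x_j} = 0 for all j < i). Then Walk_A^{2i}(1) = v_int. -/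
/-- If i ∈ [m] is the smallest index with (y_i)_{x_i} = 1, then Walk_A^{2i}(1) = v_int. -/
theorem stmt6
    (r m n : ℕ) (hr : 2 ≤ r) (hm : 1 ≤ m) (hn : r * m + 2 ≤ n)
    (x : ℕ → ℕ) (hx : ∀ i ∈ Finset.Icc 1 m, x i ∈ Finset.Icc 1 r)
    (y : ℕ → ℕ → Bool)
    (NA NB : ℕ → ℕ)
    (hNA1 : ∀ i ∈ Finset.Icc 1 m, NA (r * (i - 1) + 1) = r * (i - 1) + x i)
    (hNA2 : NA (r * m + 1) = r * m + 1)
    (hNA3 : NA (r * m + 2) = r * m + 2)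
    (hNA4 : ∀ s ∈ Finset.Icc 1 n, (∀ i ∈ Finset.Icc 1 m, s ≠ r * (i - 1) + 1) →
      s ≠ r * m + 1 → s ≠ r * m + 2 → NA s = 1)
    (hNB1 : ∀ i ∈ Finset.Icc 1 m, ∀ j ∈ Finset.Icc 1 r,
      NB (r * (i - 1) + j) = if y i j then r * m + 2 else r * i + 1)
    (hNB2 : NB (r * m + 1) = r * m + 1)
    (hNB3 : NB (r * m + 2) = r * m + 2)
    (hNB4 : ∀ s ∈ Finset.Icc 1 n,
      (∀ i ∈ Finset.Icc 1 m, ∀ j ∈ Finset.Icc 1 r, s ≠ r * (i - 1) + j) →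
      s ≠ r * m + 1 → s ≠ r * m + 2 → NB s = 1)
    (i : ℕ) (hi : i ∈ Finset.Icc 1 m) (hyi : y i (x i) = true)
    (hmin : ∀ j, 1 ≤ j → j < i → y j (x j) = false) :
    walk NA NB (2 * i) 1 = r * m + 2 := by
  have walk2 : ∀ (FA FB : ℕ → ℕ) (t : ℕ) (s : ℕ),
      walk FA FB (t + 2) s = walk FA FB t (FB (FA s)) := by
    intro FA FB t s
    simp [walk]
  obtain ⟨hi1, hi2⟩ := Finset.mem_Icc.mp hi
  have key : ∀ d k, 1 ≤ d → k + d = i → walk NA NB (2 * d) (r * k + 1) = r * m + 2 := by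
    intro d
    induction d with
    | zero => intro k h1 h2; omega
    | succ d ih =>
      intro k hd1 hki
      have hmem : k + 1 ∈ Finset.Icc 1 m := Finset.mem_Icc.mpr ⟨by omega, by omega⟩
      have hNA : NA (r * k + 1) = r * k + x (k + 1) := by
        have := hNA1 (k + 1) hmem
        simpa using this
      have hNB : NB (r * k + x (k + 1)) =
          if y (k + 1) (x (k + 1)) then r * m + 2 else r * (k + 1) + 1 := by
        have := hNB1 (k + 1) hmem (x (k + 1)) (hx (k + 1) hmem)
        simpa using this
      have h2 : 2 * (d + 1) = 2 * d + 2 := by ring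
      rw [h2, walk2, hNA, hNB]
      rcases Nat.eq_zero_or_pos d with h0 | hpos
      · have hk : k + 1 = i := by omega
        rw [hk, hyi]
        simp [h0, walk]
      · have hfalse : y (k + 1) (x (k + 1)) = false := hmin (k + 1) (by omega) (by omega)
        rw [hfalse]
        simpa using ih (k + 1) hpos (by omega)
  have := key i 0 hi1 (by omega)
  simpa using this
end

section
/- In the OR-Index pointer-chasing construction, for every k ≥ 2m: if OR-Index(x,y) = 0 (i.e., (y_i)_{x_i} = 0 for all i ∈ [m]) then Walk_A^{k}(1) = v_disj, and if OR-Index(x,y) = 1 (i.e., (y_i)_{x_i} = 1 for some i ∈ [m]) then Walk_A^{k}(1) = v_int. -/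
lemma walk_fixed {α : Type*} (FA FB : α → α) (a : α) (hA : FA a = a) (hB : FB a = a) :
    ∀ k, walk FA FB k a = a
  | 0 => rfl
  | k + 1 => by rw [walk, hA]; exact walk_fixed FB FA a hB hA k

/-- For every k ≥ 2m: if OR-Index(x,y) = 0 then Walk_A^k(1) = v_disj = rm+1, and if
OR-Index(x,y) = 1 then Walk_A^k(1) = v_int = rm+2. -/
theorem stmt7
    (r m n : ℕ) (hr : 2 ≤ r) (hm : 1 ≤ m) (hn : r * m + 2 ≤ n)
    (x : ℕ → ℕ) (hx : ∀ i ∈ Finset.Icc 1 m, x i ∈ Finset.Icc 1 r)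
    (y : ℕ → ℕ → Bool)
    (NA NB : ℕ → ℕ)
    (hNA1 : ∀ i ∈ Finset.Icc 1 m, NA (r * (i - 1) + 1) = r * (i - 1) + x i)
    (hNA2 : NA (r * m + 1) = r * m + 1)
    (hNA3 : NA (r * m + 2) = r * m + 2)
    (hNA4 : ∀ s ∈ Finset.Icc 1 n, (∀ i ∈ Finset.Icc 1 m, s ≠ r * (i - 1) + 1) →
      s ≠ r * m + 1 → s ≠ r * m + 2 → NA s = 1)
    (hNB1 : ∀ i ∈ Finset.Icc 1 m, ∀ j ∈ Finset.Icc 1 r,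
      NB (r * (i - 1) + j) = if y i j then r * m + 2 else r * i + 1)
    (hNB2 : NB (r * m + 1) = r * m + 1)
    (hNB3 : NB (r * m + 2) = r * m + 2)
    (hNB4 : ∀ s ∈ Finset.Icc 1 n,
      (∀ i ∈ Finset.Icc 1 m, ∀ j ∈ Finset.Icc 1 r, s ≠ r * (i - 1) + j) →
      s ≠ r * m + 1 → s ≠ r * m + 2 → NB s = 1)
    (k : ℕ) (hk : 2 * m ≤ k) :
    ((∀ i ∈ Finset.Icc 1 m, y i (x i) = false) → walk NA NB k 1 = r * m + 1) ∧
    ((∃ i ∈ Finset.Icc 1 m, y i (x i) = true) → walk NA NB k 1 = r * m + 2) := by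
  classical
  have key : ∀ d i k, i + d = m + 1 → 1 ≤ i → 2 * d ≤ k →
      walk NA NB k (r * (i - 1) + 1) =
        if ∃ j ∈ Finset.Icc i m, y j (x j) = true then r * m + 2 else r * m + 1 := by
    intro d
    induction d with
    | zero =>
      intro i k hi h1 hk
      have hieq : i = m + 1 := by omega
      subst hieq
      rw [if_neg]
      · have : m + 1 - 1 = m := by omega
        rw [this]
        exact walk_fixed NA NB _ hNA2 hNB2 k
      · rintro ⟨j, hj, _⟩
        rw [Finset.mem_Icc] at hj
        omega
    | succ d ih =>
      intro i k hi h1 hk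
      obtain ⟨k', rfl⟩ : ∃ k', k = k' + 2 := ⟨k - 2, by omega⟩
      have him : i ≤ m := by omega
      have himem : i ∈ Finset.Icc 1 m := Finset.mem_Icc.mpr ⟨h1, him⟩
      have hxi := hx i himem
      have hstep : walk NA NB (k' + 2) (r * (i - 1) + 1)
          = walk NA NB k' (NB (NA (r * (i - 1) + 1))) := rfl
      rw [hstep, hNA1 i himem, hNB1 i himem (x i) hxi]
      cases hyi : y i (x i) with
      | true =>
        rw [if_pos rfl, walk_fixed NA NB _ hNA3 hNB3 k', if_pos ⟨i, Finset.mem_Icc.mpr ⟨le_rfl, him⟩, hyi⟩]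
      | false =>
        rw [if_neg (by simp)]
        rw [show r * i + 1 = r * ((i + 1) - 1) + 1 by norm_num,
          ih (i + 1) k' (by omega) (by omega) (by omega)]
        congr 1
        rw [eq_iff_iff]
        constructor <;> rintro ⟨j, hj, hyj⟩
        · exact ⟨j, Finset.mem_Icc.mpr (by rw [Finset.mem_Icc] at hj; omega), hyj⟩
        · rw [Finset.mem_Icc] at hj
          rcases eq_or_lt_of_le hj.1 with h | h
          · exact absurd hyj (by rw [← h, hyi]; simp)
          · exact ⟨j, Finset.mem_Icc.mpr ⟨by omega, hj.2⟩, hyj⟩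
  have key1 := key m 1 k (by omega) le_rfl hk
  simp only [show (1:ℕ) - 1 = 0 from rfl, mul_zero, zero_add] at key1
  constructor
  · intro hall
    rw [key1, if_neg]
    rintro ⟨j, hj, hyj⟩
    exact absurd hyj (by rw [hall j hj]; simp)
  · intro hex
    rw [key1, if_pos hex]
end

section
/- Let 1 ≤ k < k' and let π be a permutation of [k] = {1,…,k}. Define π' : [k'] → [k'] by: π'(1) = k+1; π'(j) = j+1 for every j with k+1 ≤ j ≤ k'−1; π'(k') = π(1); and π'(i) = π(i) for every i ∈ [k] with i ≠ 1. Then: (a) π' is a permutation of [k']; (b) the orbit of 1 under π' has cardinality equal to the cardinality of the orbit of 1 under π plus (k'−k); and (c) π' has a single orbit on [k'] (i.e., the orbit of 1 under π' is all of [k']) if and only if π has a single orbit on [k]. -/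
/-- Inserting k'−k new elements into the cycle of a permutation π of [k] containing the
point 1: the resulting map π' is a permutation of [k'], the orbit of 1 grows by k'−k,
and π' is a single cycle on [k'] iff π is a single cycle on [k]. -/
theorem stmt12 (k k' : ℕ) (hk : 1 ≤ k) (hkk' : k < k')
    (π : ℕ → ℕ) (hπ : Set.BijOn π (Set.Icc 1 k) (Set.Icc 1 k))
    (π' : ℕ → ℕ)
    (hπ'1 : π' 1 = k + 1)
    (hπ'2 : ∀ j, k + 1 ≤ j → j ≤ k' - 1 → π' j = j + 1)
    (hπ'3 : π' k' = π 1)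
    (hπ'4 : ∀ i ∈ Set.Icc 1 k, i ≠ 1 → π' i = π i) :
    Set.BijOn π' (Set.Icc 1 k') (Set.Icc 1 k') ∧
    ({b : ℕ | ∃ t : ℕ, π'^[t] 1 = b}).ncard
      = ({b : ℕ | ∃ t : ℕ, π^[t] 1 = b}).ncard + (k' - k) ∧
    ({b : ℕ | ∃ t : ℕ, π'^[t] 1 = b} = Set.Icc 1 k'
      ↔ {b : ℕ | ∃ t : ℕ, π^[t] 1 = b} = Set.Icc 1 k) := by
  set d := k' - k with hdd
  have hd : 1 ≤ d := by omega
  have h1k : (1:ℕ) ∈ Set.Icc 1 k := by simp [hk]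
  have hmaps := hπ.mapsTo
  have hπ1mem : π 1 ∈ Set.Icc 1 k := hmaps h1k
  -- value classification of π'
  have hval : ∀ a, 1 ≤ a → a ≤ k' →
      (a = 1 ∧ π' a = k + 1) ∨ (2 ≤ a ∧ a ≤ k ∧ π' a = π a) ∨
      (k + 1 ≤ a ∧ a ≤ k' - 1 ∧ π' a = a + 1) ∨ (a = k' ∧ π' a = π 1) := by
    intro a ha1 ha2
    rcases eq_or_ne a 1 with rfl | hne1
    · exact Or.inl ⟨rfl, hπ'1⟩
    rcases le_or_gt a k with hak | hak
    · exact Or.inr (Or.inl ⟨by omega, hak, hπ'4 a ⟨ha1, hak⟩ hne1⟩)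
    rcases eq_or_ne a k' with rfl | hnek'
    · exact Or.inr (Or.inr (Or.inr ⟨rfl, hπ'3⟩))
    · exact Or.inr (Or.inr (Or.inl ⟨by omega, by omega, hπ'2 a (by omega) (by omega)⟩))
  -- MapsTo
  have hmaps' : Set.MapsTo π' (Set.Icc 1 k') (Set.Icc 1 k') := by
    intro x hx
    simp only [Set.mem_Icc] at hx ⊢
    rcases hval x hx.1 hx.2 with ⟨-, h⟩ | ⟨h2a, h2b, h⟩ | ⟨-, hb, h⟩ | ⟨-, h⟩
    · omega
    · rw [h]
      have hx' : π x ∈ Set.Icc 1 k := hmaps ⟨by omega, h2b⟩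
      simp only [Set.mem_Icc] at hx'
      omega
    · omega
    · rw [h]; simp only [Set.mem_Icc] at hπ1mem; omega
  -- InjOn
  have hinj' : Set.InjOn π' (Set.Icc 1 k') := by
    intro a ha b hb hab
    simp only [Set.mem_Icc] at ha hb
    have hπ1b : 1 ≤ π 1 ∧ π 1 ≤ k := Set.mem_Icc.mp hπ1mem
    rcases hval a ha.1 ha.2 with ⟨ea, va⟩ | ⟨ea1, ea2, va⟩ | ⟨ea1, ea2, va⟩ | ⟨ea, va⟩ <;>
      rcases hval b hb.1 hb.2 with ⟨eb, vb⟩ | ⟨eb1, eb2, vb⟩ | ⟨eb1, eb2, vb⟩ | ⟨eb, vb⟩ <;>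
      rw [va, vb] at hab
    · omega
    · have : π b ∈ Set.Icc 1 k := hmaps ⟨by omega, eb2⟩
      simp only [Set.mem_Icc] at this; omega
    · omega
    · omega
    · have : π a ∈ Set.Icc 1 k := hmaps ⟨by omega, ea2⟩
      simp only [Set.mem_Icc] at this; omega
    · exact hπ.injOn ⟨by omega, ea2⟩ ⟨by omega, eb2⟩ hab
    · have : π a ∈ Set.Icc 1 k := hmaps ⟨by omega, ea2⟩
      simp only [Set.mem_Icc] at this; omega
    · have := hπ.injOn ⟨by omega, ea2⟩ h1k hab; omega
    · omega
    · have : π b ∈ Set.Icc 1 k := hmaps ⟨by omega, eb2⟩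
      simp only [Set.mem_Icc] at this; omega
    · omega
    · omega
    · omega
    · have := hπ.injOn h1k ⟨by omega, eb2⟩ hab; omega
    · omega
    · omega
  have hbij' : Set.BijOn π' (Set.Icc 1 k') (Set.Icc 1 k') :=
    ((Set.finite_Icc 1 k').injOn_iff_bijOn_of_mapsTo hmaps').mp hinj'
  -- iterates of π stay in Icc 1 k, and iterated bijectivity
  have hiter : ∀ n, Set.BijOn (π^[n]) (Set.Icc 1 k) (Set.Icc 1 k) := by
    intro n
    induction n with
    | zero => simpa using Set.bijOn_id _
    | succ n ih =>
      rw [Function.iterate_succ]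
      exact Set.BijOn.comp ih hπ
  have hin : ∀ t, π^[t] 1 ∈ Set.Icc 1 k := fun t => (hiter t).mapsTo h1k
  -- existence of a positive period of 1 under π
  have hex : ∃ t, 0 < t ∧ π^[t] 1 = 1 := by
    obtain ⟨s, -, t, -, hst, heq⟩ :=
      Set.infinite_univ.exists_ne_map_eq_of_mapsTo
        (f := fun t : ℕ => π^[t] 1) (fun t _ => hin t) (Set.finite_Icc 1 k)
    rcases Nat.lt_or_ge s t with h | h
    · refine ⟨t - s, by omega, ?_⟩
      have h2 : π^[s] (π^[t - s] 1) = π^[s] 1 := by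
        rw [← Function.iterate_add_apply]
        rw [show s + (t - s) = t by omega]
        exact heq.symm
      exact (hiter s).injOn (hin _) h1k h2
    · have h : t < s := by omega
      refine ⟨s - t, by omega, ?_⟩
      have h2 : π^[t] (π^[s - t] 1) = π^[t] 1 := by
        rw [← Function.iterate_add_apply]
        rw [show t + (s - t) = s by omega]
        exact heq
      exact (hiter t).injOn (hin _) h1k h2
  -- minimal period m
  set m := Nat.find hex with hm_def
  obtain ⟨hm_pos, hm_eq⟩ : 0 < m ∧ π^[m] 1 = 1 := Nat.find_spec hex
  have hm_min : ∀ t, 0 < t → t < m → π^[t] 1 ≠ 1 := by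
    intro t ht htm h
    exact Nat.find_min hex htm ⟨ht, h⟩
  -- π'^[j] 1 = k + j for 1 ≤ j ≤ d
  have hj : ∀ j, 1 ≤ j → j ≤ d → π'^[j] 1 = k + j := by
    intro j
    induction j with
    | zero => omega
    | succ j ih =>
      intro _ hjd
      rcases Nat.eq_zero_or_pos j with rfl | hj0
      · simpa using hπ'1
      · rw [Function.iterate_succ_apply', ih hj0 (by omega)]
        rw [hπ'2 (k + j) (by omega) (by omega)]
        omega
  have hD : π'^[d] 1 = k' := by rw [hj d hd le_rfl]; omega
  -- π'^[d + t] 1 = π^[t] 1 for 1 ≤ t ≤ m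
  have ht : ∀ t, 1 ≤ t → t ≤ m → π'^[d + t] 1 = π^[t] 1 := by
    intro t
    induction t with
    | zero => omega
    | succ t ih =>
      intro _ htm
      rcases Nat.eq_zero_or_pos t with rfl | ht0
      · rw [show d + 1 = (d) + 1 from rfl, Function.iterate_succ_apply', hD, hπ'3]
        simp
      · rw [show d + (t + 1) = (d + t) + 1 by omega, Function.iterate_succ_apply',
          ih ht0 (by omega)]
        have hne : π^[t] 1 ≠ 1 := hm_min t ht0 (by omega)
        rw [hπ'4 _ (hin t) hne, ← Function.iterate_succ_apply' π t]
  have hper' : π'^[d + m] 1 = 1 := by rw [ht m hm_pos le_rfl, hm_eq]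
  -- periodicity reduction
  have hmod : ∀ (f : ℕ → ℕ) (p : ℕ), 0 < p → f^[p] 1 = 1 → ∀ t, f^[t] 1 = f^[t % p] 1 := by
    intro f p hp hfp t
    conv_lhs => rw [show t = p * (t / p) + t % p from (Nat.div_add_mod t p).symm]
    rw [add_comm, Function.iterate_add_apply]
    congr 1
    induction t / p with
    | zero => simp
    | succ q ihq =>
      rw [Nat.mul_succ, Function.iterate_add_apply, hfp, ihq]
  -- orbit descriptions
  have horb' : {b : ℕ | ∃ t : ℕ, π'^[t] 1 = b}
      = {b : ℕ | ∃ t : ℕ, π^[t] 1 = b} ∪ Set.Icc (k + 1) k' := by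
    ext b
    simp only [Set.mem_setOf_eq, Set.mem_union, Set.mem_Icc]
    constructor
    · rintro ⟨t, rfl⟩
      rw [hmod π' (d + m) (by omega) hper' t]
      set r := t % (d + m) with hr
      have hrlt : r < d + m := Nat.mod_lt _ (by omega)
      rcases Nat.eq_zero_or_pos r with hr0 | hr0
      · rw [hr0]; exact Or.inl ⟨0, rfl⟩
      rcases le_or_gt r d with hrd | hrd
      · right; rw [hj r hr0 hrd]; omega
      · left
        refine ⟨r - d, ?_⟩
        rw [← ht (r - d) (by omega) (by omega)]
        congr 1; omega
    · rintro (⟨t, rfl⟩ | hb)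
      · rw [hmod π m hm_pos hm_eq t]
        set r := t % m with hr
        have hrlt : r < m := Nat.mod_lt _ hm_pos
        rcases Nat.eq_zero_or_pos r with hr0 | hr0
        · rw [hr0]; exact ⟨0, rfl⟩
        · exact ⟨d + r, ht r hr0 (by omega)⟩
      · exact ⟨b - k, by rw [hj (b - k) (by omega) (by omega)]; omega⟩
  have hOsub : {b : ℕ | ∃ t : ℕ, π^[t] 1 = b} ⊆ Set.Icc 1 k := by
    rintro b ⟨t, rfl⟩; exact hin t
  have hOfin : ({b : ℕ | ∃ t : ℕ, π^[t] 1 = b}).Finite :=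
    (Set.finite_Icc 1 k).subset hOsub
  have hdisj : Disjoint {b : ℕ | ∃ t : ℕ, π^[t] 1 = b} (Set.Icc (k + 1) k') := by
    refine Set.disjoint_left.mpr ?_
    intro x hx hx'
    have := hOsub hx
    simp only [Set.mem_Icc] at this hx'
    omega
  have hIccCard : (Set.Icc (k + 1) k').ncard = d := by
    rw [show Set.Icc (k + 1) k' = ↑(Finset.Icc (k + 1) k') by simp,
      Set.ncard_coe_finset, Nat.card_Icc]
    omega
  refine ⟨hbij', ?_, ?_⟩
  · rw [horb', Set.ncard_union_eq hdisj hOfin (Set.finite_Icc _ _), hIccCard]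
  · constructor
    · intro h
      apply Set.Subset.antisymm hOsub
      intro x hx
      have hx' : x ∈ Set.Icc 1 k' := by
        simp only [Set.mem_Icc] at hx ⊢; omega
      rw [← h, horb'] at hx'
      rcases hx' with h1 | h2
      · exact h1
      · simp only [Set.mem_Icc] at hx h2; omega
    · intro h
      rw [horb', h]
      ext x
      simp only [Set.mem_union, Set.mem_Icc]
      omega
end

section
/- Let k' be a prime with k' ≤ n, let P_A, P_B be bijections of [k'] = {1,…,k'}, and let N_A, N_B : [n] → [n] satisfy N_A(i) = P_A(i) and N_B(i) = P_B(i) for all i ∈ [k']. Suppose P_B(P_A(1)) ≠ 1. Then Walk_A^{2k'}(1) = 1 (walk with respect to (N_A,N_B)) if and only if the orbit of 1 under the permutation P_B ∘ P_A is all of [k']. -/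
/-- Let k' be a prime with k' ≤ n, P_A, P_B bijections of [k'], and N_A, N_B : [n] → [n]
agreeing with P_A, P_B on [k']. If P_B(P_A(1)) ≠ 1, then Walk_A^{2k'}(1) = 1 iff the
orbit of 1 under P_B ∘ P_A is all of [k']. -/
theorem stmt14 (n k' : ℕ) (hk' : k'.Prime) (hk'n : k' ≤ n)
    (PA PB : ℕ → ℕ)
    (hPA : Set.BijOn PA (Set.Icc 1 k') (Set.Icc 1 k'))
    (hPB : Set.BijOn PB (Set.Icc 1 k') (Set.Icc 1 k'))
    (NA NB : ℕ → ℕ)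
    (hNA : ∀ i ∈ Finset.Icc 1 n, NA i ∈ Finset.Icc 1 n)
    (hNB : ∀ i ∈ Finset.Icc 1 n, NB i ∈ Finset.Icc 1 n)
    (hAgreeA : ∀ i ∈ Set.Icc 1 k', NA i = PA i)
    (hAgreeB : ∀ i ∈ Set.Icc 1 k', NB i = PB i)
    (hstep : PB (PA 1) ≠ 1) :
    walk NA NB (2 * k') 1 = 1 ↔
      {b : ℕ | ∃ t : ℕ, (PB ∘ PA)^[t] 1 = b} = Set.Icc 1 k' := by
  have hk2 := hk'.two_le
  have h1 : (1:ℕ) ∈ Set.Icc 1 k' := Set.mem_Icc.2 ⟨le_refl _, by omega⟩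
  set S := Set.Icc 1 k' with hSdef
  set f : ℕ → ℕ := PB ∘ PA with hfdef
  have hf : Set.BijOn f S S := hPB.comp hPA
  have hmaps : ∀ i ∈ S, f i ∈ S := fun i hi => hf.mapsTo hi
  have hiter : ∀ t, f^[t] 1 ∈ S := by
    intro t; induction t with
    | zero => simpa using h1
    | succ t ih => rw [Function.iterate_succ_apply']; exact hmaps _ ih
  -- Step A: the walk reduces to iterates of f
  have walklem : ∀ t, ∀ i ∈ S, walk NA NB (2*t) i = f^[t] i := by
    intro t; induction t with
    | zero => intro i hi; simp [walk]
    | succ t ih =>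
      intro i hi
      have hA : NA i = PA i := hAgreeA i hi
      have hPAi : PA i ∈ S := hPA.mapsTo hi
      have hB : NB (PA i) = PB (PA i) := hAgreeB _ hPAi
      have hfi : f i ∈ S := hmaps i hi
      have h2 : 2 * (t+1) = (2*t) + 1 + 1 := by ring
      rw [h2]
      show walk NA NB (2*t) (NB (NA i)) = f^[t+1] i
      rw [hA, hB, show PB (PA i) = f i from rfl, ih _ hfi, Function.iterate_succ_apply]
  -- Step B: 1 is a periodic point of f
  have hper : (1:ℕ) ∈ Function.periodicPts f := by
    let σ : Equiv.Perm S := hf.equiv f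
    have hσ : ∀ (x : S), ((σ x : ℕ)) = f x := fun x => rfl
    have hσn : ∀ t (x : S), ((σ^[t] x : ℕ)) = f^[t] (x:ℕ) := by
      intro t; induction t with
      | zero => intro x; rfl
      | succ t ih =>
        intro x
        rw [Function.iterate_succ_apply, Function.iterate_succ_apply, ← hσ, ih]
    refine ⟨orderOf σ, orderOf_pos σ, ?_⟩
    have hfix : σ^[orderOf σ] ⟨1, h1⟩ = ⟨1, h1⟩ := by
      rw [Equiv.Perm.iterate_eq_pow, pow_orderOf_eq_one]; rfl
    have := congrArg Subtype.val hfix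
    rw [hσn] at this
    exact this
  set m := Function.minimalPeriod f 1 with hmdef
  have hm0 : 0 < m := Function.minimalPeriod_pos_of_mem_periodicPts hper
  have hm1 : m ≠ 1 := by
    intro h
    have := Function.iterate_minimalPeriod (f := f) (x := 1)
    rw [← hmdef, h, Function.iterate_one] at this
    exact hstep this
  -- LHS ↔ m = k'
  have hLHS : walk NA NB (2 * k') 1 = 1 ↔ m = k' := by
    rw [walklem k' 1 h1]
    constructor
    · intro h
      have hd : m ∣ k' :=
        (Function.isPeriodicPt_iff_minimalPeriod_dvd).1 h
      rcases (Nat.Prime.eq_one_or_self_of_dvd hk' m hd) with h' | h'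
      · exact absurd h' hm1
      · exact h'
    · intro h
      have : Function.IsPeriodicPt f k' 1 :=
        (Function.isPeriodicPt_iff_minimalPeriod_dvd).2 (h ▸ dvd_refl m)
      exact this
  -- The orbit set
  have hOeq : {b : ℕ | ∃ t : ℕ, f^[t] 1 = b}
      = (fun t => f^[t] 1) '' (Set.Iio m) := by
    ext b
    constructor
    · rintro ⟨t, rfl⟩
      exact ⟨t % m, Nat.mod_lt _ hm0, Function.iterate_mod_minimalPeriod_eq⟩
    · rintro ⟨t, _, rfl⟩
      exact ⟨t, rfl⟩
  have hOcard : {b : ℕ | ∃ t : ℕ, f^[t] 1 = b}.ncard = m := by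
    rw [hOeq, Set.ncard_image_of_injOn Function.iterate_injOn_Iio_minimalPeriod]
    rw [← Finset.coe_range, Set.ncard_coe_finset, Finset.card_range]
  have hOsub : {b : ℕ | ∃ t : ℕ, f^[t] 1 = b} ⊆ S := by
    rintro b ⟨t, rfl⟩; exact hiter t
  have hScard : S.ncard = k' := by
    rw [hSdef, ← Finset.coe_Icc, Set.ncard_coe_finset, Nat.card_Icc]
    omega
  have hRHS : {b : ℕ | ∃ t : ℕ, f^[t] 1 = b} = S ↔ m = k' := by
    constructor
    · intro h
      rw [← hOcard, h, hScard]
    · intro h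
      refine Set.eq_of_subset_of_ncard_le hOsub ?_ (Set.finite_Icc _ _)
      rw [hOcard, hScard, h]
  rw [hLHS, ← hRHS]
end

section
/- Let k' be a prime with 2k' ≤ n, let P_A, P_B be bijections of [k'] = {1,…,k'}, and let N_A, N_B : [n] → [n] satisfy N_A(i) = P_A(i) and N_B(i) = P_B(i) for all i ∈ [k']. Suppose P_B(P_A(1)) ≠ 1. Let f : [n] → {0,1} satisfy f(1) = 0 and f(j) = 1 for all j with 2 ≤ j ≤ 2k'. Then f(Walk_A^{2k'}(1)) = 0 (walk with respect to (N_A,N_B)) if and only if the orbit of 1 under the permutation P_B ∘ P_A is all of [k'] (i.e., the union of the two matchings encoded by P_A and P_B is a Hamiltonian cycle). -/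
/-- Let k' be a prime with 2k' ≤ n, P_A, P_B bijections of [k'], N_A, N_B : [n] → [n]
agreeing with P_A, P_B on [k'], and P_B(P_A(1)) ≠ 1. If f : [n] → {0,1} satisfies
f(1) = 0 and f(j) = 1 for 2 ≤ j ≤ 2k', then f(Walk_A^{2k'}(1)) = 0 iff the orbit of 1
under P_B ∘ P_A is all of [k'] (i.e., the union of the two matchings is a Hamiltonian
cycle). -/
theorem stmt15 (n k' : ℕ) (hk' : k'.Prime) (hk'n : 2 * k' ≤ n)
    (PA PB : ℕ → ℕ)
    (hPA : Set.BijOn PA (Set.Icc 1 k') (Set.Icc 1 k'))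
    (hPB : Set.BijOn PB (Set.Icc 1 k') (Set.Icc 1 k'))
    (NA NB : ℕ → ℕ)
    (hNA : ∀ i ∈ Finset.Icc 1 n, NA i ∈ Finset.Icc 1 n)
    (hNB : ∀ i ∈ Finset.Icc 1 n, NB i ∈ Finset.Icc 1 n)
    (hAgreeA : ∀ i ∈ Set.Icc 1 k', NA i = PA i)
    (hAgreeB : ∀ i ∈ Set.Icc 1 k', NB i = PB i)
    (hstep : PB (PA 1) ≠ 1)
    (f : ℕ → Fin 2) (hf1 : f 1 = 0) (hf2 : ∀ j, 2 ≤ j → j ≤ 2 * k' → f j = 1) :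
    f (walk NA NB (2 * k') 1) = 0 ↔
      {b : ℕ | ∃ t : ℕ, (PB ∘ PA)^[t] 1 = b} = Set.Icc 1 k' := by
  set σ : ℕ → ℕ := PB ∘ PA with hσ
  have hk1 : 1 ≤ k' := hk'.one_lt.le
  have h1mem : (1 : ℕ) ∈ Set.Icc 1 k' := ⟨le_refl 1, hk1⟩
  have hmaps : Set.MapsTo σ (Set.Icc 1 k') (Set.Icc 1 k') :=
    hPB.mapsTo.comp hPA.mapsTo
  have hinj : Set.InjOn σ (Set.Icc 1 k') := hPB.injOn.comp hPA.injOn hPA.mapsTo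
  -- iterates stay in Icc
  have hiter : ∀ t : ℕ, σ^[t] 1 ∈ Set.Icc 1 k' := by
    intro t
    induction t with
    | zero => exact h1mem
    | succ t ih => rw [Function.iterate_succ_apply']; exact hmaps ih
  -- walk equals iterate
  have hwalk : ∀ m : ℕ, ∀ i ∈ Set.Icc 1 k', walk NA NB (2 * m) i = σ^[m] i := by
    intro m
    induction m with
    | zero => intro i _; rfl
    | succ m ih =>
        intro i hi
        have h2 : 2 * (m + 1) = (2 * m) + 1 + 1 := by ring
        rw [h2]
        show walk NA NB (2 * m) (NB (NA i)) = σ^[m + 1] i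
        have hAi : PA i ∈ Set.Icc 1 k' := hPA.mapsTo hi
        have hsi : σ i ∈ Set.Icc 1 k' := hmaps hi
        rw [hAgreeA i hi, hAgreeB _ hAi]
        exact (ih (σ i) hsi).trans (Function.iterate_succ_apply σ m i).symm
  -- cancellation
  have hcancel : ∀ a d : ℕ, σ^[a] 1 = σ^[a + d] 1 → σ^[d] 1 = 1 := by
    intro a
    induction a with
    | zero => intro d h; rw [Nat.zero_add] at h; exact h.symm
    | succ a ih =>
        intro d h
        apply ih
        have h2 : σ (σ^[a] 1) = σ (σ^[a + d] 1) := by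
          rw [← Function.iterate_succ_apply' σ a 1,
            ← Function.iterate_succ_apply' σ (a + d) 1]
          have e : a + 1 + d = a + d + 1 := by omega
          rw [e] at h
          exact h
        exact hinj (hiter a) (hiter (a + d)) h2
  -- pigeonhole: some positive period ≤ k'
  have hperiodic : (1 : ℕ) ∈ Function.periodicPts σ := by
    have hmapsF : ∀ t ∈ Finset.range (k' + 1), σ^[t] 1 ∈ Finset.Icc 1 k' := by
      intro t _
      have := hiter t
      simpa [Finset.mem_Icc] using this
    have hcard : (Finset.Icc 1 k').card < (Finset.range (k' + 1)).card := by
      simp [Nat.card_Icc]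
    obtain ⟨a, _, b, _, hab, heq⟩ :=
      Finset.exists_ne_map_eq_of_card_lt_of_maps_to hcard hmapsF
    rcases lt_or_gt_of_ne hab with h | h
    · refine ⟨b - a, by omega, hcancel a (b - a) ?_⟩
      rw [heq]; congr 1; omega
    · refine ⟨a - b, by omega, hcancel b (a - b) ?_⟩
      rw [← heq]; congr 1; omega
  set m := Function.minimalPeriod σ 1 with hm
  have hmpos : 0 < m := Function.minimalPeriod_pos_of_mem_periodicPts hperiodic
  have hmper : σ^[m] 1 = 1 := Function.isPeriodicPt_minimalPeriod σ 1
  -- orbit = image of Iio m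
  have horbit : {b : ℕ | ∃ t : ℕ, σ^[t] 1 = b} = (fun t => σ^[t] 1) '' Set.Iio m := by
    ext b
    constructor
    · rintro ⟨t, rfl⟩
      exact ⟨t % m, Nat.mod_lt _ hmpos, Function.iterate_mod_minimalPeriod_eq⟩
    · rintro ⟨t, _, rfl⟩
      exact ⟨t, rfl⟩
  have hncard : {b : ℕ | ∃ t : ℕ, σ^[t] 1 = b}.ncard = m := by
    rw [horbit, Set.ncard_image_of_injOn Function.iterate_injOn_Iio_minimalPeriod]
    have hIio : Set.Iio (Function.minimalPeriod σ 1) = ↑(Finset.Iio m) := by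
      rw [← hm]; simp
    rw [hIio, Set.ncard_coe_finset, Nat.card_Iio]
  have hIccN : (Set.Icc 1 k').ncard = k' := by
    have hIcc : Set.Icc (1 : ℕ) k' = ↑(Finset.Icc 1 k') := by simp
    rw [hIcc, Set.ncard_coe_finset, Nat.card_Icc]
    omega
  have hIccFin : (Set.Icc (1 : ℕ) k').Finite := Set.finite_Icc 1 k'
  have hmne1 : m ≠ 1 := by
    intro h1
    apply hstep
    have h2 := hmper
    rw [h1] at h2
    simpa [hσ] using h2
  -- key equivalence
  have hkey : σ^[k'] 1 = 1 ↔ {b : ℕ | ∃ t : ℕ, σ^[t] 1 = b} = Set.Icc 1 k' := by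
    constructor
    · intro h
      have hdvd : m ∣ k' := Function.IsPeriodicPt.minimalPeriod_dvd h
      have hmk : m = k' := by
        rcases hk'.eq_one_or_self_of_dvd m hdvd with h1 | h1
        · exact absurd h1 hmne1
        · exact h1
      apply Set.eq_of_subset_of_ncard_le
      · rintro b ⟨t, rfl⟩; exact hiter t
      · rw [hncard, hIccN, hmk]
      · exact hIccFin
    · intro h
      have hmk : m = k' := by
        have h2 := hncard
        rw [h, hIccN] at h2
        omega
      rw [← hmk]
      exact hmper
  rw [hwalk k' 1 h1mem, ← hkey]
  constructor
  · intro hf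
    by_contra hne
    have hmem := hiter k'
    have h2le : 2 ≤ σ^[k'] 1 := by
      rcases hmem with ⟨hl, hr⟩
      omega
    have hf1' := hf2 (σ^[k'] 1) h2le (by have := (hiter k').2; omega)
    rw [hf1'] at hf
    exact absurd hf (by decide)
  · intro h; rw [h]; exact hf1
end
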